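/- arXiv:2604.10394 — 2 statements merged into one kernel-verified Lean document; each statement's English description precedes it below -/
import Mathlib

section
/- For all real r > 0 and all complex w with |w| > r, the principal value integral over the region { ξ ∈ ℂ : |ξ| > r } of |ξ|^{-2}/(w - ξ) with respect to normalized area measure dA = dx dy/π equals (ln|w|² − ln r²)/w. Concretely, lim_{R→∞} (1/π)∫_{r<|ξ|<R} |ξ|^{-2}/(w−ξ) dx dy = (2 ln|w| − 2 ln r)/w. -/
/-!
In polar coordinates the integral over `r < ‖ξ‖ < R` becomes `∫ s in r..R, 2π s · A(s)`, where
`A(s)` is the circle average of `‖ξ‖⁻² (w - ξ)⁻¹` over `‖ξ‖ = s`. On that circle the weight is the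
constant `s⁻²`, and by the mean value property the circle average of `(w - ξ)⁻¹` is `w⁻¹` when
`s < ‖w‖` and `0` when `s > ‖w‖`. Hence for `R ≥ ‖w‖` the integral no longer depends on `R` and
equals `(2π / w) ∫ s in r..‖w‖, s⁻¹ = 2π (log ‖w‖ - log r) / w`.
-/

open Complex MeasureTheory Filter Set Metric Real

section PolarCoordinates

variable {E : Type*} [NormedAddCommGroup E] [NormedSpace ℝ E]

theorem integrableOn_comp_polarCoord_symm_iff (f : ℝ × ℝ → E) :
    IntegrableOn (fun p ↦ p.1 • f (polarCoord.symm p)) polarCoord.target ↔ Integrable f := by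
  rw [← integrableOn_univ, ← integrableOn_congr_set_ae polarCoord_source_ae_eq_univ,
    ← polarCoord.symm_image_target_eq_source,
    integrableOn_image_iff_integrableOn_abs_det_fderiv_smul volume
      polarCoord.open_target.measurableSet
      (fun p _ ↦ (hasFDerivAt_polarCoord_symm p).hasFDerivWithinAt) polarCoord.symm.injOn]
  refine integrableOn_congr_fun (fun p hp ↦ ?_) polarCoord.open_target.measurableSet
  rw [det_fderivPolarCoordSymm, abs_of_pos hp.1]

theorem Complex.integrableOn_comp_polarCoord_symm_iff (f : ℂ → E) :
    IntegrableOn (fun p ↦ p.1 • f (Complex.polarCoord.symm p)) polarCoord.target ↔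
      Integrable f := by
  rw [← (volume_preserving_equiv_real_prod.symm).integrable_comp_emb
    measurableEquivRealProd.symm.measurableEmbedding]
  exact _root_.integrableOn_comp_polarCoord_symm_iff (f ∘ ⇑measurableEquivRealProd.symm)

theorem circleAverage_eq_setIntegral_Ioo (f : ℂ → E) (c : ℂ) (R : ℝ) :
    circleAverage f c R = (2 * π)⁻¹ • ∫ θ in Ioo (-π) π, f (circleMap c R θ) := by
  rw [circleAverage_eq_integral_add (-π),
    intervalIntegral.integral_comp_add_right (fun θ ↦ f (circleMap c R θ)),
    intervalIntegral.integral_of_le (by linarith [pi_pos]), integral_Ioc_eq_integral_Ioo]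
  ring_nf

theorem Complex.polarCoord_symm_eq_circleMap (s θ : ℝ) :
    Complex.polarCoord.symm (s, θ) = circleMap 0 s θ := by
  simp [circleMap, Complex.exp_mul_I]

theorem Complex.setIntegral_norm_mem_eq_integral_circleAverage [CompleteSpace E] {S : Set ℝ}
    (hS : MeasurableSet S) (hS0 : S ⊆ Ioi 0) {f : ℂ → E}
    (hf : IntegrableOn f {z : ℂ | ‖z‖ ∈ S}) :
    ∫ z in {z : ℂ | ‖z‖ ∈ S}, f z = ∫ s in S, (2 * π * s) • circleAverage f 0 s := by
  set A := {z : ℂ | ‖z‖ ∈ S}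
  set P := S ×ˢ Ioo (-π) π
  set g := fun p : ℝ × ℝ ↦ p.1 • f (Complex.polarCoord.symm p)
  have hA : MeasurableSet A := measurable_norm hS
  have hP : MeasurableSet P := hS.prod measurableSet_Ioo
  have hPt : P ⊆ polarCoord.target := by
    rw [polarCoord_target]; exact prod_mono hS0 subset_rfl
  have ht := polarCoord.open_target.measurableSet
  have hgA : EqOn (fun p ↦ p.1 • A.indicator f (Complex.polarCoord.symm p)) (P.indicator g)
      polarCoord.target := fun p hp ↦ by
    have hmem : Complex.polarCoord.symm p ∈ A ↔ p ∈ P := by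
      rw [polarCoord_target] at hp
      simp [A, P, abs_of_pos (show 0 < p.1 from hp.1), hp.2]
    dsimp only
    by_cases h : p ∈ P
    · rw [indicator_of_mem h, indicator_of_mem (hmem.2 h)]
    · rw [indicator_of_notMem h, indicator_of_notMem (mt hmem.1 h), smul_zero]
  have hg : IntegrableOn g P := by
    have := (Complex.integrableOn_comp_polarCoord_symm_iff _).2 ((integrable_indicator_iff hA).2 hf)
    rw [integrableOn_congr_fun hgA ht, IntegrableOn, integrable_indicator_iff hP, IntegrableOn,
      Measure.restrict_restrict hP, inter_eq_self_of_subset_left hPt] at this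
    exact this
  calc ∫ z in A, f z = ∫ z, A.indicator f z := (integral_indicator hA).symm
    _ = ∫ p in polarCoord.target, P.indicator g p := by
      rw [← Complex.integral_comp_polarCoord_symm, setIntegral_congr_fun ht hgA]
    _ = ∫ s in S, ∫ θ in Ioo (-π) π, s • f (circleMap 0 s θ) := by
      rw [setIntegral_indicator hP, inter_eq_self_of_subset_right hPt, Measure.volume_eq_prod,
        setIntegral_prod _ hg]
      simp only [g, Complex.polarCoord_symm_eq_circleMap]
    _ = ∫ s in S, (2 * π * s) • circleAverage f 0 s := by
      congr 1 with s
      rw [integral_smul, circleAverage_eq_setIntegral_Ioo, smul_smul]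
      congr 1
      field_simp

end PolarCoordinates

theorem circleAverage_inv_sub_of_lt {w : ℂ} {s : ℝ} (h : |s| < ‖w‖) :
    circleAverage (fun z ↦ (w - z)⁻¹) 0 s = w⁻¹ := by
  have hd : DifferentiableOn ℂ (fun z ↦ (w - z)⁻¹) (closedBall 0 |s|) := fun z hz ↦ by
    have hz : ‖z‖ ≤ |s| := by simpa using hz
    have hwz : w - z ≠ 0 := sub_ne_zero.2 fun hwz ↦ by rw [hwz] at h; linarith
    exact (by fun_prop (disch := exact hwz) : DifferentiableAt ℂ (fun z ↦ (w - z)⁻¹) z)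
      |>.differentiableWithinAt
  simpa using (hd.diffContOnCl_ball subset_rfl).circleAverage

/-- Rescaling to the unit circle and inverting turns `(w - z)⁻¹` into `z / (w z - s)`, which is
holomorphic on the closed unit disc and vanishes at its centre. -/
theorem circleAverage_inv_sub_of_gt {w : ℂ} {s : ℝ} (h : ‖w‖ < |s|) :
    circleAverage (fun z ↦ (w - z)⁻¹) 0 s = 0 := by
  have hne : ∀ z ∈ closedBall (0 : ℂ) |1|, w * z - s ≠ 0 := fun z hz ↦ by
    have hz : ‖z‖ ≤ 1 := by simpa using hz
    refine sub_ne_zero.2 fun hwz ↦ ?_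
    have : ‖w * z‖ ≤ ‖w‖ := by
      rw [norm_mul]; exact mul_le_of_le_one_right (norm_nonneg w) hz
    rw [hwz, norm_real, norm_eq_abs] at this
    linarith
  have hd : DifferentiableOn ℂ (fun z ↦ z / (w * z - s)) (closedBall 0 |1|) := fun z hz ↦ by
    have := hne z hz
    exact (by fun_prop (disch := exact this) : DifferentiableAt ℂ (fun z ↦ z / (w * z - s)) z)
      |>.differentiableWithinAt
  rw [circleAverage_eq_circleAverage_zero_one, ← circleAverage_zero_one_congr_inv]
  calc circleAverage (fun z ↦ (w - (s * z⁻¹ + 0))⁻¹) 0 1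
      = circleAverage (fun z ↦ z / (w * z - s)) 0 1 := circleAverage_congr_sphere fun z hz ↦ by
        have hz0 : z ≠ 0 := by rintro rfl; simp at hz
        have := hne z (sphere_subset_closedBall hz)
        field_simp
        simp [this]
    _ = 0 := by rw [(hd.diffContOnCl_ball subset_rfl).circleAverage]; simp

theorem locallyIntegrable_inv_norm_sub {F : Type*} [NormedAddCommGroup F] [NormedSpace ℝ F]
    [FiniteDimensional ℝ F] [MeasurableSpace F] [BorelSpace F] {μ : Measure F}
    [μ.IsAddHaarMeasure] (hF : 1 < Module.finrank ℝ F) (w : F) :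
    LocallyIntegrable (fun x ↦ ‖w - x‖⁻¹) μ := by
  have h0 : LocallyIntegrable (fun x : F ↦ ‖x‖⁻¹) μ :=
    locallyIntegrable_of_norm_le_rpow (C := 1) (α := 1) hF.le (by exact_mod_cast hF)
      (ae_of_all _ fun x ↦ by simp [Real.rpow_neg_one]) (by fun_prop)
  have hmap : μ.map (Homeomorph.subRight w) = μ := by
    simpa [sub_eq_add_neg] using map_add_right_eq_self μ (-w)
  have := (locallyIntegrable_map_homeomorph (Homeomorph.subRight w)).1 (hmap.symm ▸ h0)
  simpa [Function.comp_def, norm_sub_rev] using this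

theorem integrableOn_annulus_inv_norm_sq_div_sub {r : ℝ} (hr : 0 < r) (w : ℂ) (R : ℝ) :
    IntegrableOn (fun ξ : ℂ ↦ ((‖ξ‖ : ℂ) ^ 2)⁻¹ / (w - ξ)) {ξ | r < ‖ξ‖ ∧ ‖ξ‖ < R} := by
  have hA : MeasurableSet {ξ : ℂ | r < ‖ξ‖ ∧ ‖ξ‖ < R} := measurable_norm measurableSet_Ioo
  have hg : IntegrableOn (fun ξ : ℂ ↦ ‖w - ξ‖⁻¹) {ξ | r < ‖ξ‖ ∧ ‖ξ‖ < R} :=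
    ((locallyIntegrable_inv_norm_sub (μ := volume) (by simp) w).integrableOn_isCompact
      (isCompact_closedBall 0 R)).mono_set fun ξ hξ ↦ mem_closedBall_zero_iff.2 hξ.2.le
  have hf : Measurable fun ξ : ℂ ↦ ((‖ξ‖ : ℂ) ^ 2)⁻¹ / (w - ξ) := by fun_prop
  refine (hg.const_mul (r ^ 2)⁻¹).mono' hf.aestronglyMeasurable
    (ae_restrict_of_forall_mem hA fun ξ hξ ↦ ?_)
  rw [norm_div, norm_inv, norm_pow, norm_real, norm_norm, div_eq_mul_inv]
  gcongr
  exact hξ.1.le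

theorem smul_circleAverage_inv_norm_sq_div_sub {w : ℂ} {s : ℝ} (hs : 0 < s) (hsw : s ≠ ‖w‖) :
    (2 * π * s) • circleAverage (fun ξ : ℂ ↦ ((‖ξ‖ : ℂ) ^ 2)⁻¹ / (w - ξ)) 0 s =
      (Iio ‖w‖).indicator (fun s ↦ (2 * π * s⁻¹) • w⁻¹) s := by
  have hsphere : circleAverage (fun ξ : ℂ ↦ ((‖ξ‖ : ℂ) ^ 2)⁻¹ / (w - ξ)) 0 s =
      ((s : ℂ) ^ 2)⁻¹ • circleAverage (fun ξ ↦ (w - ξ)⁻¹) 0 s := by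
    rw [← circleAverage_fun_smul]
    refine circleAverage_congr_sphere fun ξ hξ ↦ ?_
    rw [mem_sphere_zero_iff_norm, abs_of_pos hs] at hξ
    simp [hξ, div_eq_mul_inv]
  rw [hsphere]
  rcases hsw.lt_or_gt with h | h
  · rw [circleAverage_inv_sub_of_lt (by rwa [abs_of_pos hs]), indicator_of_mem (mem_Iio.2 h)]
    rw [Complex.real_smul, Complex.real_smul, smul_eq_mul]
    push_cast
    field_simp
  · rw [circleAverage_inv_sub_of_gt (by rwa [abs_of_pos hs]),
      indicator_of_notMem (notMem_Iio.2 h.le), smul_zero, smul_zero]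

theorem setIntegral_annulus_inv_norm_sq_div_sub {r R : ℝ} (hr : 0 < r) {w : ℂ} (hw : r < ‖w‖)
    (hR : ‖w‖ ≤ R) :
    ∫ ξ in {ξ : ℂ | r < ‖ξ‖ ∧ ‖ξ‖ < R}, ((‖ξ‖ : ℂ) ^ 2)⁻¹ / (w - ξ) =
      (2 * π * (Real.log ‖w‖ - Real.log r)) • w⁻¹ := by
  have hs0 : Ioo r R ⊆ Ioi 0 := Ioo_subset_Ioi_self.trans (Ioi_subset_Ioi hr.le)
  have hne : ∀ᵐ s : ℝ, s ≠ ‖w‖ := compl_mem_ae_iff.2 (measure_singleton _)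
  calc _ = ∫ s in Ioo r R, (2 * π * s) •
        circleAverage (fun ξ : ℂ ↦ ((‖ξ‖ : ℂ) ^ 2)⁻¹ / (w - ξ)) 0 s :=
      Complex.setIntegral_norm_mem_eq_integral_circleAverage measurableSet_Ioo hs0
        (integrableOn_annulus_inv_norm_sq_div_sub hr w R)
    _ = ∫ s in Ioo r R, (Iio ‖w‖).indicator (fun s ↦ (2 * π * s⁻¹) • w⁻¹) s := by
      refine setIntegral_congr_ae measurableSet_Ioo (hne.mono fun s hsw hs ↦ ?_)
      exact smul_circleAverage_inv_norm_sq_div_sub (hs0 hs) hsw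
    _ = (∫ s in r..‖w‖, 2 * π * s⁻¹) • w⁻¹ := by
      rw [setIntegral_indicator measurableSet_Iio, Ioo_inter_Iio, min_eq_right hR,
        integral_smul_const, intervalIntegral.integral_of_le hw.le,
        integral_Ioc_eq_integral_Ioo]
    _ = (2 * π * (Real.log ‖w‖ - Real.log r)) • w⁻¹ := by
      rw [intervalIntegral.integral_const_mul, integral_inv_of_pos hr (hr.trans hw),
        Real.log_div (hr.trans hw).ne' hr.ne']

/-- The weighted Cauchy transform of the exterior of the disk of radius `r`
with weight `|ξ|⁻²`: for `|w| > r > 0`, the principal value integral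
`lim_{R→∞} (1/π) ∫_{r<|ξ|<R} |ξ|⁻²/(w-ξ) dxdy = (ln|w|² - ln r²)/w`. -/
theorem log_renormalized_cauchy_transform
    (r : ℝ) (hr : 0 < r) (w : ℂ) (hw : r < ‖w‖) :
    Tendsto
      (fun R : ℝ =>
        (1 / (Real.pi : ℂ)) *
          ∫ ξ in {ξ : ℂ | r < ‖ξ‖ ∧ ‖ξ‖ < R},
            ((‖ξ‖ : ℂ) ^ 2)⁻¹ / (w - ξ))
      atTop
      (nhds (((2 * Real.log (‖w‖) - 2 * Real.log r : ℝ) : ℂ) / w)) := by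
  refine tendsto_const_nhds.congr' ?_
  filter_upwards [eventually_ge_atTop ‖w‖] with R hR
  rw [setIntegral_annulus_inv_norm_sq_div_sub hr hw hR, Complex.real_smul]
  push_cast
  field_simp
end

section
/- Suppose {Ω_t}_{t>0} ⊆ ℂ is a family of domains with Ω_t = α(t)·Ω_{t₀} for t > t₀, where α is increasing with α(t) → ∞, and each Ω_t satisfies the log-weighted quadrature identity with the same rational quadrature function h not identically of the form c/w. If additionally the quadrature function of a domain not containing 0 is unique, then h must satisfy the functional equation h(w) = α(t)·h(α(t)w) for all t > t₀ (case 0 ∉ Ω_{t₀}), and any rational h satisfying this identity for a set of values α(t) accumulating at ∞ must be of the form h(w) = c/w for some c ∈ ℂ. -/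
/-!
Pick `w₀ ≠ 0` in `U` and put `c = w₀ h(w₀)`. The functional equation gives `z h(z) = c` at every
point `z = aₙ w₀` of the orbit, which is infinite because `|aₙ w₀| → ∞`. Hence the polynomial
`(X p - c q) q` has infinitely many roots, so `X p = c q` and `h(w) = c / w`.
-/

open Filter Polynomial

theorem Set.infinite_range_of_tendsto_norm_atTop {ι E : Type*} [Norm E] {l : Filter ι} [l.NeBot]
    {f : ι → E} (hf : Tendsto (fun i => ‖f i‖) l atTop) : (Set.range f).Infinite := by
  have hnorm : (norm '' Set.range f).Infinite := by
    rw [← Set.range_comp]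
    exact Set.infinite_of_not_bddAbove (not_bddAbove_of_tendsto_atTop hf)
  exact hnorm.of_image _

theorem Polynomial.X_mul_eq_C_mul_of_infinite {K : Type*} [Field K] {p q : K[X]} (hq : q ≠ 0)
    {c : K} {S : Set K} (hS : S.Infinite) (h : ∀ z ∈ S, z * (p.eval z / q.eval z) = c) :
    X * p = C c * q := by
  have hroots : S ⊆ {z | ((X * p - C c * q) * q).IsRoot z} := by
    intro z hz
    by_cases hqz : q.eval z = 0
    · simp [hqz]
    · have hpz : z * p.eval z = c * q.eval z := by
        rw [← h z hz]
        field_simp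
      simp [hpz]
  have hzero := eq_zero_of_infinite_isRoot _ (hS.mono hroots)
  exact sub_eq_zero.1 ((mul_eq_zero.1 hzero).resolve_right hq)

theorem scaling_functional_equation_rigidity_general
    (p q : Polynomial ℂ) (hq : q ≠ 0) (h : ℂ → ℂ)
    (hh : h = fun w => p.eval w / q.eval w)
    (a : ℕ → ℂ)
    (hatop : Filter.Tendsto (fun n => ‖a n‖) Filter.atTop Filter.atTop)
    (U : Set ℂ) (hU : IsOpen U) (hUne : U.Nonempty)
    (hsym : ∀ n : ℕ, ∀ w ∈ U, h w = a n * h (a n * w)) :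
    ∃ c : ℂ, ∀ w : ℂ, w ≠ 0 → q.eval w ≠ 0 → h w = c / w := by
  obtain ⟨w₀, hw₀, hw₀U⟩ := (dense_compl_singleton (0 : ℂ)).exists_mem_open hU hUne
  have horbit : ∀ z ∈ Set.range (fun n => a n * w₀), z * h z = w₀ * h w₀ := by
    rintro _ ⟨n, rfl⟩
    rw [hsym n w₀ hw₀U]
    ring
  have hinf : (Set.range fun n => a n * w₀).Infinite := by
    refine Set.infinite_range_of_tendsto_norm_atTop (l := atTop) ?_
    simpa only [norm_mul] using hatop.atTop_mul_const (norm_pos_iff.2 hw₀)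
  subst hh
  have hpq := X_mul_eq_C_mul_of_infinite hq hinf horbit
  refine ⟨w₀ * (p.eval w₀ / q.eval w₀), fun w hw hqw => ?_⟩
  have hpqw := congrArg (eval w) hpq
  simp only [eval_mul, eval_X, eval_C] at hpqw
  show p.eval w / q.eval w = _
  rw [div_eq_div_iff hqw hw]
  linear_combination hpqw

/-- If a rational function `h = p/q` satisfies `h(w) = aₙ·h(aₙw)` on a nonempty open set
for a sequence `aₙ` of nonzero complex numbers with `|aₙ| → ∞`, then `h(w) = c/w` for some
constant `c`. (Algebraic core of the traveling-wave rigidity for LQDs.) -/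
theorem scaling_functional_equation_rigidity
    (p q : Polynomial ℂ) (hq : q ≠ 0) (h : ℂ → ℂ)
    (hh : h = fun w => p.eval w / q.eval w)
    (a : ℕ → ℂ) (ha : ∀ n, a n ≠ 0)
    (hatop : Filter.Tendsto (fun n => ‖a n‖) Filter.atTop Filter.atTop)
    (U : Set ℂ) (hU : IsOpen U) (hUne : U.Nonempty)
    (hsym : ∀ n : ℕ, ∀ w ∈ U, h w = a n * h (a n * w)) :
    ∃ c : ℂ, ∀ w : ℂ, w ≠ 0 → q.eval w ≠ 0 → h w = c / w :=
  scaling_functional_equation_rigidity_general p q hq h hh a hatop U hU hUne hsym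
end
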